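/- arXiv:2210.10296 — 2 statements merged into one kernel-verified Lean document; each statement's English description precedes it below -/
import Mathlib

section
/- Let X be a nonempty compact topological space, T ∈ (0, ∞], and let u : [0,T) × X → ℝ be continuous such that for each x ∈ X the function t ↦ u(t,x) is differentiable in t, with the partial derivative ∂u/∂t continuous on [0,T) × X. Define m(t) = max_{x∈X} u(t,x). Suppose there is a constant c ∈ ℝ such that for every t ∈ [0,T) and every x ∈ X with u(t,x) = m(t), one has ∂u/∂t(t,x) ≤ c. Then m(t) ≤ m(0) + c·t for all t ∈ [0,T). -/
/-!
Hamilton's trick. For `r > c` put `M(s) = max_x u(s,x) - r s` and let `s` be a point of `[0,t]`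
where `M` is largest. If `s > 0`, pick `x` with `u(s,x) = max u(s,·)`; then `σ ↦ u(σ,x) - rσ`
is bounded by `M` and agrees with it at `s`, so it is maximal on `[0,s]` at `s` and its left
derivative `∂ₜu(s,x) - r` is nonnegative, contradicting `∂ₜu(s,x) ≤ c < r`. Hence `M(t) ≤ M(0)`,
and letting `r ↓ c` gives the claim.
-/

open Set Filter Topology

theorem IsMaxOn.hasDerivWithinAt_Icc_nonneg {g : ℝ → ℝ} {g' a b : ℝ} (hab : a < b)
    (hmax : IsMaxOn g (Icc a b) b) (hg : HasDerivWithinAt g g' (Icc a b) b) : 0 ≤ g' := by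
  have hcone : a - b ∈ posTangentConeAt (Icc a b) b :=
    mem_posTangentConeAt_of_segment_subset <| by
      rw [add_sub_cancel, segment_symm]
      exact segment_subset_Icc hab.le
  have := hmax.localize.hasFDerivWithinAt_nonpos hg.hasFDerivWithinAt hcone
  simp only [ContinuousLinearMap.toSpanSingleton_apply, smul_eq_mul] at this
  exact nonneg_of_mul_nonpos_right this (sub_neg.2 hab)

section CompactSup

variable {α X L : Type*} [TopologicalSpace α] [TopologicalSpace X] [CompactSpace X]
  [ConditionallyCompleteLinearOrder L] [TopologicalSpace L] [OrderTopology L]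

theorem Continuous.exists_eq_ciSup [Nonempty X] {f : X → L} (hf : Continuous f) :
    ∃ x, f x = ⨆ y, f y := by
  obtain ⟨x, -, hx⟩ := isCompact_univ.exists_sSup_image_eq univ_nonempty hf.continuousOn
  rw [image_univ] at hx
  exact ⟨x, hx.symm⟩

theorem ContinuousOn.ciSup_of_compactSpace {S : Set α} {u : α → X → L}
    (hu : ContinuousOn (Function.uncurry u) (S ×ˢ univ)) :
    ContinuousOn (fun s => ⨆ x, u s x) S := by
  rw [continuousOn_iff_continuous_domRestrict]
  have hcont : Continuous ↿fun (s : S) => u s :=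
    hu.comp_continuous (continuous_subtype_val.prodMap continuous_id)
      fun p => ⟨p.1.2, mem_univ _⟩
  have h := isCompact_univ.continuous_sSup hcont
  simp only [image_univ] at h
  exact h

end CompactSup

section HamiltonTrick

variable {X : Type*} [TopologicalSpace X] [CompactSpace X] [Nonempty X]
  {u u' : ℝ → X → ℝ} {a b c : ℝ}

theorem ciSup_le_ciSup_add_mul_of_deriv_lt (hab : a ≤ b)
    (hu : ContinuousOn (Function.uncurry u) (Icc a b ×ˢ univ))
    (hderiv : ∀ s ∈ Ioc a b, ∀ x, HasDerivWithinAt (u · x) (u' s x) (Icc a s) s)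
    (hmax : ∀ s ∈ Ioc a b, ∀ x, u s x = ⨆ y, u s y → u' s x < c) :
    ⨆ x, u b x ≤ (⨆ x, u a x) + c * (b - a) := by
  set M : ℝ → ℝ := fun s => (⨆ x, u s x) - c * s
  have hslice : ∀ s ∈ Icc a b, Continuous (u s) := fun s hs =>
    hu.comp_continuous (.prodMk_right s) fun x => ⟨hs, mem_univ x⟩
  have hM : ContinuousOn M (Icc a b) :=
    hu.ciSup_of_compactSpace.sub (continuousOn_const.mul continuousOn_id)
  obtain ⟨s, hs, hsmax⟩ := isCompact_Icc.exists_isMaxOn (nonempty_Icc.2 hab) hM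
  have hsa : s = a := by
    by_contra hne
    have has : s ∈ Ioc a b := ⟨hs.1.lt_of_ne' hne, hs.2⟩
    obtain ⟨x, hx⟩ := (hslice s hs).exists_eq_ciSup
    have hloc : IsMaxOn (fun σ => u σ x - c * σ) (Icc a s) s := fun σ hσ => by
      have hσ' : σ ∈ Icc a b := ⟨hσ.1, hσ.2.trans hs.2⟩
      calc u σ x - c * σ
          ≤ M σ := sub_le_sub_right (le_ciSup (isCompact_range (hslice σ hσ')).bddAbove x) _
        _ ≤ M s := hsmax hσ'
        _ = u s x - c * s := by rw [hx]
    have := hloc.hasDerivWithinAt_Icc_nonneg has.1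
      ((hderiv s has x).sub ((hasDerivWithinAt_id s _).const_mul c))
    linarith [hmax s has x hx]
  have hba : M b ≤ M a := hsa ▸ hsmax (right_mem_Icc.2 hab)
  dsimp only [M] at hba
  linarith

theorem ciSup_le_ciSup_add_mul_of_deriv_le (hab : a ≤ b)
    (hu : ContinuousOn (Function.uncurry u) (Icc a b ×ˢ univ))
    (hderiv : ∀ s ∈ Ioc a b, ∀ x, HasDerivWithinAt (u · x) (u' s x) (Icc a s) s)
    (hmax : ∀ s ∈ Ioc a b, ∀ x, u s x = ⨆ y, u s y → u' s x ≤ c) :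
    ⨆ x, u b x ≤ (⨆ x, u a x) + c * (b - a) := by
  have hlim : Tendsto (fun r => (⨆ x, u a x) + r * (b - a)) (𝓝[>] c)
      (𝓝 ((⨆ x, u a x) + c * (b - a))) :=
    ((continuous_const.add (continuous_id.mul continuous_const)).tendsto c).mono_left
      nhdsWithin_le_nhds
  refine ge_of_tendsto hlim (eventually_nhdsWithin_of_forall fun r hr => ?_)
  exact ciSup_le_ciSup_add_mul_of_deriv_lt hab hu hderiv
    fun s hs x hx => (hmax s hs x hx).trans_lt hr

end HamiltonTrick

theorem stmt_4_general (X : Type*) [TopologicalSpace X] [CompactSpace X] [Nonempty X]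
    (T : EReal) (u u' : ℝ → X → ℝ) (c : ℝ)
    (hu : ContinuousOn (fun p : ℝ × X => u p.1 p.2)
      ({t : ℝ | 0 ≤ t ∧ (t : EReal) < T} ×ˢ (univ : Set X)))
    (hderiv : ∀ (t : ℝ) (x : X), 0 ≤ t → (t : EReal) < T →
      HasDerivWithinAt (fun s : ℝ => u s x) (u' t x) {s : ℝ | 0 ≤ s ∧ (s : EReal) < T} t)
    (hmax : ∀ (t : ℝ) (x : X), 0 ≤ t → (t : EReal) < T →
      u t x = (⨆ y : X, u t y) → u' t x ≤ c) :
    ∀ t : ℝ, 0 ≤ t → (t : EReal) < T →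
      (⨆ x : X, u t x) ≤ (⨆ x : X, u 0 x) + c * t := by
  intro t ht htT
  have hsub : ∀ {s}, s ≤ t → Icc 0 s ⊆ {s : ℝ | 0 ≤ s ∧ (s : EReal) < T} := fun hst σ hσ =>
    ⟨hσ.1, lt_of_le_of_lt (by exact_mod_cast hσ.2.trans hst) htT⟩
  have := ciSup_le_ciSup_add_mul_of_deriv_le ht (hu.mono (prod_mono (hsub le_rfl) subset_rfl))
    (fun s hs x => (hderiv s x hs.1.le (hsub hs.2 (right_mem_Icc.2 hs.1.le)).2).mono (hsub hs.2))
    (fun s hs x => hmax s x hs.1.le (hsub le_rfl ⟨hs.1.le, hs.2⟩).2)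
  rwa [sub_zero] at this

/-- Hamilton's trick / maximum principle at the spatial maximum. `X` is a
nonempty compact space, `T ∈ (0, ∞]`, `u` is continuous on `[0,T) × X` and differentiable
in `t` with continuous time derivative `u'`; if at every spatial maximum point the time
derivative is `≤ c`, then `m(t) := max_x u(t,x)` satisfies `m(t) ≤ m(0) + c·t`. -/
theorem stmt_4 (X : Type*) [TopologicalSpace X] [CompactSpace X] [Nonempty X]
    (T : EReal) (hT : 0 < T) (u u' : ℝ → X → ℝ) (c : ℝ)
    (hu : ContinuousOn (fun p : ℝ × X => u p.1 p.2)
      ({t : ℝ | 0 ≤ t ∧ (t : EReal) < T} ×ˢ (univ : Set X)))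
    (hu' : ContinuousOn (fun p : ℝ × X => u' p.1 p.2)
      ({t : ℝ | 0 ≤ t ∧ (t : EReal) < T} ×ˢ (univ : Set X)))
    (hderiv : ∀ (t : ℝ) (x : X), 0 ≤ t → (t : EReal) < T →
      HasDerivWithinAt (fun s : ℝ => u s x) (u' t x) {s : ℝ | 0 ≤ s ∧ (s : EReal) < T} t)
    (hmax : ∀ (t : ℝ) (x : X), 0 ≤ t → (t : EReal) < T →
      u t x = (⨆ y : X, u t y) → u' t x ≤ c) :
    ∀ t : ℝ, 0 ≤ t → (t : EReal) < T →
      (⨆ x : X, u t x) ≤ (⨆ x : X, u 0 x) + c * t :=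
  stmt_4_general X T u u' c hu hderiv hmax
end

section
/- Let X be a nonempty compact topological space, and let u : [0,∞) × X → ℝ be continuous such that for each x ∈ X the function t ↦ u(t,x) is differentiable in t, with the partial derivative ∂u/∂t continuous on [0,∞) × X. Define m(t) = min_{x∈X} u(t,x). Suppose there is a constant C > 0 such that for every t ≥ 0 and every x ∈ X with u(t,x) = m(t), one has ∂u/∂t(t,x) ≥ −C·u(t,x) − C. Then m(t) ≥ min(m(0), −1) for all t ≥ 0. -/
open Set

/-- Minimum principle on `[0,∞) × X` for compact nonempty `X`: if at every
spatial minimum point `∂u/∂t ≥ -C·u - C` (with `C > 0`), then the spatial minimum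
`m(t) := min_x u(t,x)` satisfies `m(t) ≥ min(m(0), -1)` for all `t ≥ 0`. -/
theorem stmt_5 (X : Type*) [TopologicalSpace X] [CompactSpace X] [Nonempty X]
    (u u' : ℝ → X → ℝ) (C : ℝ) (hC : 0 < C)
    (hu : ContinuousOn (fun p : ℝ × X => u p.1 p.2) ((Ici (0 : ℝ)) ×ˢ (univ : Set X)))
    (hu' : ContinuousOn (fun p : ℝ × X => u' p.1 p.2) ((Ici (0 : ℝ)) ×ˢ (univ : Set X)))
    (hderiv : ∀ (t : ℝ) (x : X), 0 ≤ t →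
      HasDerivWithinAt (fun s : ℝ => u s x) (u' t x) (Ici (0 : ℝ)) t)
    (hmin : ∀ (t : ℝ) (x : X), 0 ≤ t →
      u t x = (⨅ y : X, u t y) → -C * u t x - C ≤ u' t x) :
    ∀ t : ℝ, 0 ≤ t → min (⨅ x : X, u 0 x) (-1) ≤ (⨅ x : X, u t x) := by
  -- For each t ≥ 0, the map x ↦ u t x is continuous.
  have hcontt : ∀ t : ℝ, 0 ≤ t → Continuous (fun x : X => u t x) := by
    intro t ht
    exact hu.comp_continuous (Continuous.prodMk continuous_const continuous_id)
      (fun x => ⟨ht, mem_univ x⟩)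
  -- The spatial infimum is attained.
  have hminex : ∀ t : ℝ, 0 ≤ t → ∃ x : X, (∀ y, u t x ≤ u t y) ∧ u t x = ⨅ y : X, u t y := by
    intro t ht
    obtain ⟨x, -, hx⟩ := isCompact_univ.exists_isMinOn univ_nonempty
      (hcontt t ht).continuousOn
    refine ⟨x, fun y => hx (mem_univ y), ?_⟩
    refine le_antisymm (le_ciInf fun y => hx (mem_univ y)) (ciInf_le ⟨u t x, ?_⟩ x)
    rintro _ ⟨y, rfl⟩; exact hx (mem_univ y)
  intro t₀ ht₀
  by_contra hcon
  push_neg at hcon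
  set M : ℝ := min (⨅ x : X, u 0 x) (-1) with hM
  obtain ⟨x₀, hx₀min, hx₀eq⟩ := hminex t₀ ht₀
  have hmt₀ : u t₀ x₀ < M := by rw [hx₀eq]; exact hcon
  set M' : ℝ := (u t₀ x₀ + M) / 2 with hM'
  have hM'M : M' < M := by rw [hM']; linarith
  have hM'lt : M' < -1 := lt_of_lt_of_le hM'M (min_le_right _ _)
  have hM'gt : u t₀ x₀ < M' := by rw [hM']; linarith
  -- The set of times in [0, t₀] where the minimum is ≤ M'.
  set K : Set (ℝ × X) := Icc 0 t₀ ×ˢ (univ : Set X) with hKdef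
  have hKc : IsCompact K := isCompact_Icc.prod isCompact_univ
  set B : Set (ℝ × X) := K ∩ (fun p : ℝ × X => u p.1 p.2) ⁻¹' (Iic M') with hBdef
  have hBclosed : IsClosed B := by
    refine ContinuousOn.preimage_isClosed_of_isClosed (hu.mono ?_)
      (isClosed_Icc.prod isClosed_univ) isClosed_Iic
    rintro ⟨t, x⟩ ⟨⟨h1, h2⟩, -⟩
    exact ⟨h1, mem_univ x⟩
  have hBcomp : IsCompact B := hKc.of_isClosed_subset hBclosed inter_subset_left
  set A : Set ℝ := Prod.fst '' B with hAdef
  have hAcomp : IsCompact A := hBcomp.image continuous_fst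
  have hAne : A.Nonempty :=
    ⟨t₀, ⟨(t₀, x₀), ⟨⟨⟨ht₀, le_refl t₀⟩, mem_univ x₀⟩, le_of_lt hM'gt⟩, rfl⟩⟩
  have hAbdd : BddBelow A := by
    refine ⟨0, ?_⟩
    rintro t ⟨p, ⟨⟨h1, -⟩, rfl⟩⟩
    exact h1.1.1
  set t₁ : ℝ := sInf A with ht₁def
  have ht₁A : t₁ ∈ A := hAcomp.isClosed.csInf_mem hAne hAbdd
  obtain ⟨p, ⟨⟨⟨hp0, hpt₀⟩, -⟩, hup⟩, hpfst⟩ := ht₁A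
  rw [mem_preimage, mem_Iic] at hup
  -- hp0 : 0 ≤ p.1, hpt₀ : p.1 ≤ t₀, hup : u p.1 p.2 ≤ M', hpfst : p.1 = t₁
  have ht₁0 : 0 ≤ t₁ := hpfst ▸ hp0
  have ht₁t₀ : t₁ ≤ t₀ := hpfst ▸ hpt₀
  have hut₁ : u t₁ p.2 ≤ M' := by rw [← hpfst]; exact hup
  -- t₁ > 0 since m(0) ≥ M > M'.
  have ht₁pos : 0 < t₁ := by
    rcases lt_or_eq_of_le ht₁0 with h | h
    · exact h
    · exfalso
      obtain ⟨z, hzmin, hzeq⟩ := hminex 0 le_rfl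
      have h1 : (⨅ x : X, u 0 x) ≤ u 0 p.2 := by rw [← hzeq]; exact hzmin p.2
      have h2 : u 0 p.2 ≤ M' := by rw [h]; exact hut₁
      have h3 : M ≤ ⨅ x : X, u 0 x := min_le_left _ _
      linarith
  -- Minimizer at time t₁.
  obtain ⟨x₁, hx₁min, hx₁eq⟩ := hminex t₁ ht₁0
  have hux₁ : u t₁ x₁ ≤ M' := le_trans (hx₁min p.2) hut₁
  have hd' : -C * u t₁ x₁ - C ≤ u' t₁ x₁ := hmin t₁ x₁ ht₁0 hx₁eq
  have hdpos : 0 < u' t₁ x₁ := by nlinarith [mul_pos hC (show 0 < -1 - u t₁ x₁ by linarith)]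
  -- The derivative at t₁ is a genuine derivative since t₁ > 0.
  have hder : HasDerivAt (fun s : ℝ => u s x₁) (u' t₁ x₁) t₁ :=
    (hderiv t₁ x₁ ht₁0).hasDerivAt (Ici_mem_nhds ht₁pos)
  rw [hasDerivAt_iff_tendsto_slope] at hder
  have hslope : ∀ᶠ s in nhdsWithin t₁ {t₁}ᶜ, 0 < slope (fun s : ℝ => u s x₁) t₁ s :=
    hder.eventually (eventually_gt_nhds hdpos)
  have h2 : ∀ᶠ s in nhdsWithin t₁ (Iio t₁), 0 < slope (fun s : ℝ => u s x₁) t₁ s :=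
    hslope.filter_mono (nhdsWithin_mono _ fun s hs => ne_of_lt hs)
  have h3 : ∀ᶠ s in nhdsWithin t₁ (Iio t₁), 0 < s :=
    eventually_nhdsWithin_of_eventually_nhds (eventually_gt_nhds ht₁pos)
  have h4 : ∀ᶠ s in nhdsWithin t₁ (Iio t₁), s < t₁ := eventually_mem_nhdsWithin
  obtain ⟨s, hs1, hs2, hs3⟩ := (h2.and (h3.and h4)).exists
  -- u s x₁ < u t₁ x₁ since the slope is positive and s < t₁.
  have hlt : u s x₁ < u t₁ x₁ := by
    rw [slope_def_field] at hs1
    rcases div_pos_iff.mp hs1 with ⟨h, h'⟩ | ⟨h, h'⟩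
    · linarith
    · linarith
  -- Then s ∈ A with s < t₁ = sInf A: contradiction.
  have hsA : s ∈ A := by
    refine ⟨(s, x₁), ⟨⟨⟨le_of_lt hs2, le_trans (le_of_lt hs3) ht₁t₀⟩, mem_univ x₁⟩, ?_⟩, rfl⟩
    rw [mem_preimage, mem_Iic]
    linarith
  have := csInf_le hAbdd hsA
  linarith
end
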